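/- arXiv:1705.03211 — 5 statements merged into one kernel-verified Lean document; each statement's English description precedes it below -/
import Mathlib

section
/- In every Mīmāṃsā model, the axiom schema (1): (□(φ→ψ) ∧ O(φ/θ)) → O(ψ/θ) is valid. -/
/-- Formulas of bMDL: atoms, ⊥, →, □, and dyadic O(·/·). -/
inductive Fm (V : Type) : Type
  | var : V → Fm V
  | bot : Fm V
  | imp : Fm V → Fm V → Fm V
  | box : Fm V → Fm V
  | ob  : Fm V → Fm V → Fm V

namespace Fm
variable {V : Type}
def neg (φ : Fm V) : Fm V := φ.imp .bot
def top : Fm V := (Fm.bot (V := V)).neg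
def and (φ ψ : Fm V) : Fm V := (φ.imp ψ.neg).neg
def or  (φ ψ : Fm V) : Fm V := φ.neg.imp ψ
def iff (φ ψ : Fm V) : Fm V := (φ.imp ψ).and (ψ.imp φ)
end Fm

/-- A Mīmāṃsā model: an m-frame (nonempty W, reflexive transitive R,
neighbourhood map η satisfying conditions (ii)–(v)) with a valuation. -/
structure MModel (V W : Type) where
  ne : Nonempty W
  R : W → W → Prop
  refl : ∀ w, R w w
  trans : ∀ {a b c}, R a b → R b c → R a c
  η : W → Set (Set W × Set W)
  η_sub : ∀ w X Y, (X, Y) ∈ η w → X ⊆ {v | R w v} ∧ Y ⊆ {v | R w v}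
  η_mono : ∀ w X Y Z, (X, Z) ∈ η w → X ⊆ Y → Y ⊆ {v | R w v} → (Y, Z) ∈ η w
  η_nonempty : ∀ w X, ((∅ : Set W), X) ∉ η w
  η_noconflict : ∀ w X Y, (X, Y) ∈ η w → (Xᶜ ∩ {v | R w v}, Y) ∉ η w
  σ : W → Set V

/-- Truth of a formula at a world. -/
def MModel.sat {V W : Type} (M : MModel V W) : W → Fm V → Prop
  | w, .var p => p ∈ M.σ w
  | _, .bot => False
  | w, .imp φ ψ => M.sat w φ → M.sat w ψ
  | w, .box φ => ∀ v, M.R w v → M.sat v φ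
  | w, .ob φ ψ =>
      ({v | M.sat v φ} ∩ {v | M.R w v}, {v | M.sat v ψ} ∩ {v | M.R w v}) ∈ M.η w

/-- Validity in a model: truth at every world. -/
def MModel.valid {V W : Type} (M : MModel V W) (φ : Fm V) : Prop :=
  ∀ w, M.sat w φ

namespace MModel

variable {V W : Type} (M : MModel V W)

theorem sat_and {w : W} {φ ψ : Fm V} : M.sat w (φ.and ψ) ↔ M.sat w φ ∧ M.sat w ψ := by
  simp only [Fm.and, Fm.neg, sat]
  tauto

theorem inter_mem_η_of_subset {w : W} {X Y Z : Set W} (h : (X ∩ {v | M.R w v}, Z) ∈ M.η w)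
    (hXY : X ∩ {v | M.R w v} ⊆ Y) : (Y ∩ {v | M.R w v}, Z) ∈ M.η w :=
  M.η_mono w _ _ _ h (Set.subset_inter hXY Set.inter_subset_right) Set.inter_subset_right

theorem sat_ob_of_sat_box_imp {w : W} {φ ψ θ : Fm V} (hbox : M.sat w (.box (φ.imp ψ)))
    (hob : M.sat w (.ob φ θ)) : M.sat w (.ob ψ θ) :=
  M.inter_mem_η_of_subset hob fun v ⟨hφ, hwv⟩ => hbox v hwv hφ

end MModel

/-- Axiom (1): (□(φ→ψ) ∧ O(φ/θ)) → O(ψ/θ) is valid in every m-model. -/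
theorem stmt1 {V W : Type} (M : MModel V W) (φ ψ θ : Fm V) :
    M.valid (((Fm.box (φ.imp ψ)).and (Fm.ob φ θ)).imp (Fm.ob ψ θ)) := by
  intro w h
  obtain ⟨hbox, hob⟩ := M.sat_and.mp h
  exact M.sat_ob_of_sat_box_imp hbox hob
end

section
/- In every Mīmāṃsā model, the axiom schema (3): (□((ψ→θ)∧(θ→ψ)) ∧ O(φ/ψ)) → O(φ/θ) is valid. -/
namespace MModel

variable {V W : Type} (M : MModel V W)

theorem sat_box_imp_and_imp {w : W} {ψ θ : Fm V} :
    M.sat w (.box ((ψ.imp θ).and (θ.imp ψ))) ↔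
      ∀ v, M.R w v → (M.sat v ψ ↔ M.sat v θ) := by
  simp only [sat, sat_and]
  exact forall₂_congr fun _ _ => iff_iff_implies_and_implies.symm

theorem sat_ob_congr_right {w : W} {φ ψ θ : Fm V}
    (h : ∀ v, M.R w v → (M.sat v ψ ↔ M.sat v θ)) :
    M.sat w (.ob φ ψ) ↔ M.sat w (.ob φ θ) := by
  have hsets : {v | M.sat v ψ} ∩ {v | M.R w v} = {v | M.sat v θ} ∩ {v | M.R w v} := by
    ext v
    exact and_congr_left (h v)
  simp only [sat, hsets]

end MModel

/-- Axiom (3): (□((ψ→θ)∧(θ→ψ)) ∧ O(φ/ψ)) → O(φ/θ) is valid in every m-model. -/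
theorem stmt3 {V W : Type} (M : MModel V W) (φ ψ θ : Fm V) :
    M.valid (((Fm.box ((ψ.imp θ).and (θ.imp ψ))).and (Fm.ob φ ψ)).imp (Fm.ob φ θ)) := by
  intro w h
  obtain ⟨hbox, hob⟩ := M.sat_and.1 h
  exact (M.sat_ob_congr_right (M.sat_box_imp_and_imp.1 hbox)).1 hob
end

section
/- There exists a Mīmāṃsā model and a world in it satisfying the formula □(he→hrm) ∧ □(sy→he) ∧ □O(¬hrm/⊤) ∧ □O(sy/de), where hrm, he, sy, de are distinct propositional variables. Consequently, the set {he→hrm, sy→he, O(¬hrm/⊤), O(sy/de)} is consistent over Mīmāṃsā semantics (its global assumption does not entail ⊥). -/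
/-!
Two worlds suffice: every atom is true at one world and false at the other, so each atom
implies every other. Over the universal frame, let `O(φ/ψ)` hold iff `φ` is true at a single
world `pin ⟦ψ⟧` chosen from the extension of the condition: membership of one world is upward
closed and never holds for both a set and its complement, so this is a Mīmāṃsā model. Taking
`pin ⟦⊤⟧` to be the world where `hrm` fails and `pin ⟦de⟧` the world where `sy` holds makes
both obligations true everywhere.
-/

lemma MModel.sat_and_s6 {V W : Type} (M : MModel V W) (w : W) (φ ψ : Fm V) :
    M.sat w (φ.and ψ) ↔ M.sat w φ ∧ M.sat w ψ := by
  simp only [Fm.and, Fm.neg, MModel.sat]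
  tauto

lemma MModel.sat_box_of_valid {V W : Type} {M : MModel V W} {φ : Fm V} (h : M.valid φ)
    (w : W) : M.sat w (.box φ) :=
  fun v _ => h v

def MModel.pinned {V W : Type} (pin : Set W → W) (σ : W → Set V) : MModel V W where
  ne := ⟨pin ∅⟩
  R _ _ := True
  refl _ := trivial
  trans _ _ := trivial
  η _ := {p | pin p.2 ∈ p.1}
  η_sub _ _ _ _ := ⟨fun _ _ => trivial, fun _ _ => trivial⟩
  η_mono _ _ _ _ hX hXY _ := hXY hX
  η_nonempty _ _ h := h
  η_noconflict _ _ _ hX h := h.1 hX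
  σ := σ

namespace MModel.pinned

variable {V W : Type} (pin : Set W → W) (σ : W → Set V)

lemma sat_ob (w : W) (φ ψ : Fm V) :
    (pinned pin σ).sat w (.ob φ ψ) ↔
      (pinned pin σ).sat (pin {v | (pinned pin σ).sat v ψ}) φ := by
  simp [MModel.sat, pinned]

end MModel.pinned

inductive SyenaAtom
  | hrm | he | sy | de

open Classical in
noncomputable def syenaModel : MModel SyenaAtom Bool :=
  .pinned (fun Y => if Y = Set.univ then false else true) (fun b => if b then Set.univ else ∅)

lemma syenaModel_sat_var (w : Bool) (p : SyenaAtom) : syenaModel.sat w (.var p) ↔ w = true := by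
  cases w <;> simp [syenaModel, MModel.sat, MModel.pinned]

lemma syenaModel_valid_imp_var (p q : SyenaAtom) : syenaModel.valid ((Fm.var p).imp (.var q)) :=
  fun w => ((syenaModel_sat_var w p).trans (syenaModel_sat_var w q).symm).mp

lemma syenaModel_valid_ob_neg_top (p : SyenaAtom) :
    syenaModel.valid (Fm.ob (Fm.var p).neg .top) := by
  intro w
  unfold syenaModel
  rw [MModel.pinned.sat_ob]
  simp [MModel.sat, Fm.neg, Fm.top, MModel.pinned]

lemma syenaModel_valid_ob_var (p q : SyenaAtom) : syenaModel.valid (Fm.ob (.var p) (.var q)) := by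
  intro w
  unfold syenaModel
  rw [MModel.pinned.sat_ob]
  simp [MModel.sat, MModel.pinned, Set.ext_iff]

/-- There is a Mīmāṃsā model and a world satisfying the boxed Śyena
assumptions (with distinct variables); moreover a model in which all four
Śyena assumptions are valid (so they do not semantically entail ⊥). -/
theorem stmt6 :
    ∃ (V W : Type) (M : MModel V W) (hrm he sy de : V),
      hrm ≠ he ∧ hrm ≠ sy ∧ hrm ≠ de ∧ he ≠ sy ∧ he ≠ de ∧ sy ≠ de ∧
      (∃ w : W, M.sat w
        ((((Fm.box ((Fm.var he).imp (Fm.var hrm))).and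
            (Fm.box ((Fm.var sy).imp (Fm.var he)))).and
          (Fm.box (Fm.ob (Fm.var hrm).neg Fm.top))).and
          (Fm.box (Fm.ob (Fm.var sy) (Fm.var de))))) ∧
      (M.valid ((Fm.var he).imp (Fm.var hrm)) ∧
       M.valid ((Fm.var sy).imp (Fm.var he)) ∧
       M.valid (Fm.ob (Fm.var hrm).neg Fm.top) ∧
       M.valid (Fm.ob (Fm.var sy) (Fm.var de)) ∧
       ¬ M.valid Fm.bot) := by
  open SyenaAtom MModel in
  have he_hrm := syenaModel_valid_imp_var he hrm
  have sy_he := syenaModel_valid_imp_var sy he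
  have ob_hrm := syenaModel_valid_ob_neg_top hrm
  have ob_sy := syenaModel_valid_ob_var sy de
  refine ⟨_, _, syenaModel, hrm, he, sy, de, nofun, nofun, nofun, nofun, nofun, nofun,
    ⟨true, ?_⟩, he_hrm, sy_he, ob_hrm, ob_sy, fun h => h true⟩
  simp only [sat_and_s6]
  exact ⟨⟨⟨sat_box_of_valid he_hrm _, sat_box_of_valid sy_he _⟩, sat_box_of_valid ob_hrm _⟩,
    sat_box_of_valid ob_sy _⟩
end

section
/- In any Mīmāṃsā model, if at world w both O(φ/θ) and O(ψ/θ) hold and every world accessible from w satisfying ψ falsifies φ, then there is a contradiction; formally, it is impossible that ([[φ]]∩R[w],[[θ]]∩R[w])∈η(w), ([[ψ]]∩R[w],[[θ]]∩R[w])∈η(w), and [[φ]]∩[[ψ]]∩R[w]=∅ all hold. -/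
theorem MModel.not_disjoint_of_mem_η {V W : Type} (M : MModel V W) {w : W} {X Y Z : Set W}
    (hX : (X, Z) ∈ M.η w) (hY : (Y, Z) ∈ M.η w) : ¬ Disjoint X Y := by
  intro hXY
  have hY_sub : Y ⊆ Xᶜ ∩ {v | M.R w v} :=
    Set.subset_inter hXY.symm.subset_compl_right (M.η_sub w Y Z hY).1
  exact M.η_noconflict w X Z hX (M.η_mono w Y _ Z hY hY_sub Set.inter_subset_right)

/-- Conflicting obligations over the same condition with incompatible
contents are impossible: not all of O(φ/θ)∈η-form, O(ψ/θ)∈η-form and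
[[φ]]∩[[ψ]]∩R[w]=∅ can hold. -/
theorem stmt8 {V W : Type} (M : MModel V W) (w : W) (φ ψ θ : Fm V) :
    ¬ (({v | M.sat v φ} ∩ {v | M.R w v}, {v | M.sat v θ} ∩ {v | M.R w v}) ∈ M.η w ∧
       ({v | M.sat v ψ} ∩ {v | M.R w v}, {v | M.sat v θ} ∩ {v | M.R w v}) ∈ M.η w ∧
       {v | M.sat v φ} ∩ {v | M.sat v ψ} ∩ {v | M.R w v} = ∅) := by
  rintro ⟨hφ, hψ, hempty⟩
  refine M.not_disjoint_of_mem_η hφ hψ (Set.disjoint_iff_inter_eq_empty.mpr ?_)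
  rwa [← Set.inter_inter_distrib_right]
end

section
/- Monotonicity of the deontic operator is semantically valid: in any Mīmāṃsā model, if at world w every accessible world satisfying φ satisfies θ, every accessible world satisfies ψ↔χ, and O(φ/ψ) holds at w, then O(θ/χ) holds at w. (This is the semantic soundness of the rule Mon.) -/
/-- Semantic soundness of the rule Mon. -/
theorem stmt10 {V W : Type} (M : MModel V W) (w : W) (φ ψ θ χ : Fm V)
    (h1 : {v | M.sat v φ} ∩ {v | M.R w v} ⊆ {v | M.sat v θ} ∩ {v | M.R w v})
    (h2 : {v | M.sat v ψ} ∩ {v | M.R w v} = {v | M.sat v χ} ∩ {v | M.R w v})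
    (h3 : M.sat w (Fm.ob φ ψ)) :
    M.sat w (Fm.ob θ χ) := by
  change (_, _) ∈ M.η w at h3 ⊢
  rw [← h2]
  exact M.η_mono w _ _ _ h3 h1 Set.inter_subset_right
end
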